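/- arXiv:1007.4845 — 2 statements merged into one kernel-verified Lean document; each statement's English description precedes it below -/
import Mathlib

section
/- Let X be a finite set with n ≥ 1 elements. The maximum cardinality of a subsemilattice of T(X) is 2^{n-1}. -/
def IsSubsemilattice {X : Type*} (S : Set (X → X)) : Prop :=
  S.Nonempty ∧ (∀ e ∈ S, e ∘ e = e) ∧ (∀ e ∈ S, ∀ f ∈ S, e ∘ f = f ∘ e) ∧
    (∀ e ∈ S, ∀ f ∈ S, e ∘ f ∈ S)

/-!
Commuting idempotents with the same fixed points coincide, and the fixed points of `e ∘ f` are
those common to `e` and `f`. Hence the fixed-point sets of a subsemilattice of `T(X)` are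
distinct, nonempty and closed under intersection; the least of them is nonempty, so one point
lies in all of them, and at most `2 ^ (n - 1)` subsets of `X` contain a given point.
Conversely, for `x₀ ∈ X` the maps that fix a set `A ∋ x₀` pointwise and send everything else
to `x₀` form a subsemilattice with one element for each such `A`.
-/

open Function Set

theorem InfClosed.exists_isLeast {α : Type*} [SemilatticeInf α] {s : Set α} (hs : InfClosed s)
    (hfin : s.Finite) (hne : s.Nonempty) : ∃ a, IsLeast s a := by
  obtain ⟨a, ha⟩ := hfin.exists_minimal hne
  exact ⟨a, ha.prop, fun b hb => le_inf_iff.mp (ha.le_of_le (hs ha.prop hb) inf_le_left) |>.2⟩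

theorem ncard_setOf_mem {X : Type*} [Fintype X] (x : X) :
    {A : Set X | x ∈ A}.ncard = 2 ^ (Fintype.card X - 1) := by
  have hcompl : {A : Set X | x ∈ A}ᶜ = compl ⁻¹' {A : Set X | x ∈ A} := by ext; simp
  have htwice : 2 * {A : Set X | x ∈ A}.ncard = 2 ^ Fintype.card X := by
    rw [two_mul]
    nth_rewrite 2 [← ncard_preimage_of_injective_subset_range compl_injective
      (by simp [compl_surjective.range_eq])]
    rw [← hcompl, ncard_add_ncard_compl, Nat.card_eq_fintype_card, Fintype.card_set]
  obtain ⟨k, hk⟩ := Nat.exists_eq_add_one.mpr (Fintype.card_pos_iff.mpr ⟨x⟩)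
  rw [hk, pow_succ] at htwice
  rw [hk, Nat.add_sub_cancel]
  omega

section FixedPoints

variable {X : Type*} {e f : X → X}

theorem fixedPoints_comp_of_comp_comm (hf : f ∘ f = f) (hef : e ∘ f = f ∘ e) :
    fixedPoints (e ∘ f) = fixedPoints e ∩ fixedPoints f := by
  ext x
  refine ⟨fun hx => ?_, fun ⟨hex, hfx⟩ => hex.comp hfx⟩
  have hx : e (f x) = x := hx
  have hcomm : ∀ y, e (f y) = f (e y) := congrFun hef
  have hfx : f x = x :=
    calc f x = f (e (f x)) := by rw [hx]
      _ = f (f (e x)) := by rw [hcomm]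
      _ = f (e x) := congrFun hf _
      _ = x := by rw [← hcomm, hx]
  refine ⟨?_, hfx⟩
  calc e x = e (f x) := by rw [hfx]
    _ = x := hx

theorem eq_of_fixedPoints_eq (he : e ∘ e = e) (hf : f ∘ f = f) (hef : e ∘ f = f ∘ e)
    (h : fixedPoints e = fixedPoints f) : e = f := by
  funext x
  have hex : e x ∈ fixedPoints f := h ▸ congrFun he x
  have hfx : f x ∈ fixedPoints e := h ▸ congrFun hf x
  calc e x = f (e x) := hex.symm
    _ = e (f x) := (congrFun hef x).symm
    _ = f x := hfx

theorem fixedPoints_nonempty_of_comp_self [Nonempty X] (hf : f ∘ f = f) :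
    (fixedPoints f).Nonempty :=
  ⟨f (Classical.arbitrary X), congrFun hf _⟩

end FixedPoints

namespace IsSubsemilattice

variable {X : Type*} {S : Set (X → X)}

theorem injOn_fixedPoints (hS : IsSubsemilattice S) : InjOn fixedPoints S :=
  fun e he f hf => eq_of_fixedPoints_eq (hS.2.1 e he) (hS.2.1 f hf) (hS.2.2.1 e he f hf)

theorem infClosed_image_fixedPoints (hS : IsSubsemilattice S) : InfClosed (fixedPoints '' S) := by
  rintro _ ⟨e, he, rfl⟩ _ ⟨f, hf, rfl⟩
  exact ⟨e ∘ f, hS.2.2.2 e he f hf,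
    fixedPoints_comp_of_comp_comm (hS.2.1 f hf) (hS.2.2.1 e he f hf)⟩

theorem exists_forall_mem_fixedPoints [Finite X] [Nonempty X] (hS : IsSubsemilattice S) :
    ∃ z, ∀ e ∈ S, z ∈ fixedPoints e := by
  obtain ⟨_, ⟨e₀, he₀, rfl⟩, hleast⟩ :=
    hS.infClosed_image_fixedPoints.exists_isLeast (toFinite _) (hS.1.image _)
  obtain ⟨z, hz⟩ := fixedPoints_nonempty_of_comp_self (hS.2.1 e₀ he₀)
  exact ⟨z, fun e he => hleast ⟨e, he, rfl⟩ hz⟩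

theorem ncard_le [Fintype X] [Nonempty X] (hS : IsSubsemilattice S) :
    S.ncard ≤ 2 ^ (Fintype.card X - 1) := by
  obtain ⟨z, hz⟩ := hS.exists_forall_mem_fixedPoints
  calc S.ncard = (fixedPoints '' S).ncard := hS.injOn_fixedPoints.ncard_image.symm
    _ ≤ {A : Set X | z ∈ A}.ncard := ncard_le_ncard (by rintro _ ⟨e, he, rfl⟩; exact hz e he)
    _ = 2 ^ (Fintype.card X - 1) := ncard_setOf_mem z

end IsSubsemilattice

section CollapseOutside

variable {X : Type*} {x₀ : X} {A B : Set X}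

open Classical in
noncomputable def collapseOutside (x₀ : X) (A : Set X) : X → X :=
  fun x => if x ∈ A then x else x₀

theorem collapseOutside_comp (hA : x₀ ∈ A) :
    collapseOutside x₀ A ∘ collapseOutside x₀ B = collapseOutside x₀ (A ∩ B) := by
  funext x
  by_cases hxB : x ∈ B <;> by_cases hxA : x ∈ A <;> simp [collapseOutside, *]

theorem fixedPoints_collapseOutside (hA : x₀ ∈ A) : fixedPoints (collapseOutside x₀ A) = A := by
  ext x
  by_cases hx : x ∈ A
  · simp [collapseOutside, IsFixedPt, hx]
  · simp only [mem_fixedPoints, IsFixedPt, collapseOutside, hx, if_false, iff_false]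
    rintro rfl
    exact hx hA

theorem isSubsemilattice_image_collapseOutside (x₀ : X) :
    IsSubsemilattice (collapseOutside x₀ '' {A | x₀ ∈ A}) := by
  refine ⟨⟨_, univ, mem_univ x₀, rfl⟩, ?_, ?_, ?_⟩
  · rintro _ ⟨A, hA : x₀ ∈ A, rfl⟩
    rw [collapseOutside_comp hA, inter_self]
  · rintro _ ⟨A, hA : x₀ ∈ A, rfl⟩ _ ⟨B, hB : x₀ ∈ B, rfl⟩
    rw [collapseOutside_comp hA, collapseOutside_comp hB, inter_comm]
  · rintro _ ⟨A, hA : x₀ ∈ A, rfl⟩ _ ⟨B, hB : x₀ ∈ B, rfl⟩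
    exact ⟨A ∩ B, ⟨hA, hB⟩, (collapseOutside_comp hA).symm⟩

theorem ncard_image_collapseOutside [Fintype X] (x₀ : X) :
    (collapseOutside x₀ '' {A | x₀ ∈ A}).ncard = 2 ^ (Fintype.card X - 1) := by
  have hinj : InjOn (collapseOutside x₀) {A | x₀ ∈ A} :=
    LeftInvOn.injOn (f₁' := fixedPoints) fun A hA => fixedPoints_collapseOutside hA
  rw [hinj.ncard_image, ncard_setOf_mem]

end CollapseOutside

theorem max_card_subsemilattice {X : Type*} [Fintype X] {n : ℕ}
    (hn : Fintype.card X = n) (hn1 : 1 ≤ n) :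
    IsGreatest {m : ℕ | ∃ S : Set (X → X), IsSubsemilattice S ∧ S.ncard = m}
      (2 ^ (n - 1)) := by
  subst hn
  have : Nonempty X := Fintype.card_pos_iff.mp hn1
  let x₀ := Classical.arbitrary X
  refine ⟨⟨_, isSubsemilattice_image_collapseOutside x₀, ncard_image_collapseOutside x₀⟩, ?_⟩
  rintro m ⟨S, hS, rfl⟩
  exact hS.ncard_le
end

section
/- Let X be a finite set with n elements and fix t ∈ X. For every integer m with 1 ≤ m ≤ 2^{n-1}, there exists a subsemilattice S of T(X) with |S| = m; in fact S may be taken to be a subsemilattice of E_t. -/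
open scoped Classical

noncomputable def eFix {X : Type*} (t : X) (A : Set X) : X → X :=
  fun x => if x ∈ A then x else t

def Esl {X : Type*} (t : X) : Set (X → X) :=
  {e | ∃ A : Set X, A ⊆ {t}ᶜ ∧ e = @eFix X t A}

lemma eFix_comp {X : Type*} (t : X) (A B : Set X) (hA : A ⊆ {t}ᶜ) :
    eFix t A ∘ eFix t B = eFix t (A ∩ B) := by
  funext x
  simp only [Function.comp, eFix, Set.mem_inter_iff]
  by_cases hB : x ∈ B
  · by_cases hAx : x ∈ A <;> simp [hB, hAx]
  · have : t ∉ A := fun h => hA h rfl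
    simp [hB, this]

lemma eFix_inj {X : Type*} (t : X) {A B : Set X} (hA : A ⊆ {t}ᶜ) (hB : B ⊆ {t}ᶜ)
    (h : eFix t A = eFix t B) : A = B := by
  ext x
  constructor
  · intro hx
    have hxt : x ≠ t := hA hx
    have := congrFun h x
    simp only [eFix, if_pos hx] at this
    by_contra hxB
    rw [if_neg hxB] at this; exact hxt this
  · intro hx
    have hxt : x ≠ t := hB hx
    have := congrFun h x
    simp only [eFix, if_pos hx] at this
    by_contra hxA
    rw [if_neg hxA] at this; exact hxt this.symm

theorem all_cards_realized {X : Type*} [Fintype X] {n : ℕ}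
    (hn : Fintype.card X = n) (t : X) :
    ∀ m : ℕ, 1 ≤ m → m ≤ 2 ^ (n - 1) →
      ∃ S : Set (X → X), S ⊆ Esl t ∧ IsSubsemilattice S ∧ S.ncard = m := by
  intro m hm1 hm2
  -- card of complement of {t}
  have hcard : Fintype.card ({t}ᶜ : Set X) = n - 1 := by
    rw [Fintype.card_compl_set, Set.card_singleton, hn]
  let e : ({t}ᶜ : Set X) ≃ Fin (n - 1) := Fintype.equivFinOfCardEq hcard
  let g : X → ℕ := fun x => if h : x ∈ ({t}ᶜ : Set X) then (e ⟨x, h⟩ : ℕ) else 0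
  let A : ℕ → Set X := fun i => {x | ∃ _ : x ∈ ({t}ᶜ : Set X), Nat.testBit i (g x)}
  have hAsub : ∀ i, A i ⊆ {t}ᶜ := fun i x hx => hx.1
  have hAinter : ∀ i j, A i ∩ A j = A (i &&& j) := by
    intro i j
    ext x
    simp only [A, Set.mem_inter_iff, Set.mem_setOf_eq, Nat.testBit_land, Bool.and_eq_true]
    constructor
    · rintro ⟨⟨h, hi⟩, ⟨_, hj⟩⟩; exact ⟨h, hi, hj⟩
    · rintro ⟨h, hi, hj⟩; exact ⟨⟨h, hi⟩, ⟨h, hj⟩⟩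
  -- injectivity of A on Iio m
  have hAinj : Set.InjOn A (Set.Iio m) := by
    intro i hi j hj hij
    by_contra hne
    obtain ⟨k, hk⟩ : ∃ k, Nat.testBit i k ≠ Nat.testBit j k := by
      by_contra h
      push_neg at h
      exact hne (Nat.eq_of_testBit_eq h)
    have hklt : k < n - 1 := by
      by_contra hk'
      push_neg at hk'
      have hik : Nat.testBit i k = false :=
        Nat.testBit_eq_false_of_lt (lt_of_lt_of_le hi (le_trans hm2 (Nat.pow_le_pow_right (by norm_num) hk')))
      have hjk : Nat.testBit j k = false :=
        Nat.testBit_eq_false_of_lt (lt_of_lt_of_le hj (le_trans hm2 (Nat.pow_le_pow_right (by norm_num) hk')))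
      rw [hik, hjk] at hk; exact hk rfl
    set x : ({t}ᶜ : Set X) := e.symm ⟨k, hklt⟩ with hx
    have hgx : g (x : X) = k := by
      simp only [g, dif_pos x.2]
      have : (⟨(x : X), x.2⟩ : ({t}ᶜ : Set X)) = x := Subtype.ext rfl
      rw [this, hx, Equiv.apply_symm_apply]
    have : ((x : X) ∈ A i) ↔ ((x : X) ∈ A j) := by rw [hij]
    simp only [A, Set.mem_setOf_eq, hgx] at this
    apply hk
    cases hti : Nat.testBit i k <;> cases htj : Nat.testBit j k
    · rfl
    · exact absurd (this.mpr ⟨x.2, htj⟩).2 (by simp [hti])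
    · exact absurd (this.mp ⟨x.2, hti⟩).2 (by simp [htj])
    · rfl
  refine ⟨(fun i => eFix t (A i)) '' Set.Iio m, ?_, ⟨?_, ?_, ?_, ?_⟩, ?_⟩
  · rintro f ⟨i, _, rfl⟩
    exact ⟨A i, hAsub i, rfl⟩
  · exact ⟨eFix t (A 0), ⟨0, hm1, rfl⟩⟩
  · rintro f ⟨i, hi, rfl⟩
    rw [eFix_comp t _ _ (hAsub i), Set.inter_self]
  · rintro f ⟨i, hi, rfl⟩ f' ⟨j, hj, rfl⟩
    rw [eFix_comp t _ _ (hAsub i), eFix_comp t _ _ (hAsub j), Set.inter_comm]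
  · rintro f ⟨i, hi, rfl⟩ f' ⟨j, hj, rfl⟩
    rw [eFix_comp t _ _ (hAsub i), hAinter]
    exact ⟨i &&& j, lt_of_le_of_lt Nat.and_le_left hi, rfl⟩
  · rw [Set.ncard_image_of_injOn, Set.ncard_eq_toFinset_card', Set.toFinset_Iio,
      Nat.card_Iio]
    intro i hi j hj hij
    exact hAinj hi hj (eFix_inj t (hAsub i) (hAsub j) hij)
end
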